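/- Let f : B(y,3R) → B(p',3R) be a pointed ε-Hausdorff approximation between closed 3R-balls in complete locally compact length spaces, with respect to restricted metrics, where f(y) = p'. Set δ = √ε. Then for all a, b ∈ B(y,R), the intrinsic distance in B(p', R+ε+δ) between f(a) and f(b) satisfies d_{B(p',R+ε+δ)}(f(a), f(b)) ≤ d_{B(y,R)}(a,b) + (2R+1)δ + ε, where d_{B(y,R)} denotes the intrinsic metric of B(y,R). -/

import Mathlib

open Metric Set

/-- The length of a path, as the extended-real total variation of the map. -/
noncomputable def pathLength {X : Type*} [PseudoMetricSpace X] {x y : X} (γ : Path x y) :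
    ENNReal :=
  eVariationOn (fun t => γ t) Set.univ

/-- The induced (intrinsic) length pseudo-distance on a subset `A` of a metric space:
the infimum of lengths of continuous paths joining the two points and staying inside `A`. -/
noncomputable def intrinsicEDist {X : Type*} [PseudoMetricSpace X] (A : Set X) (x y : X) :
    ENNReal :=
  ⨅ (γ : Path x y) (_ : Set.range (fun t => γ t) ⊆ A), pathLength γ

/-- A metric space is a length space if its distance is the induced length metric. -/
def IsLengthSpace (X : Type*) [PseudoMetricSpace X] : Prop :=
  ∀ x y : X, edist x y = intrinsicEDist Set.univ x y

/-- An `ε`-Hausdorff approximation from `A ⊆ X` to `B ⊆ Y` with respect to the restricted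
(ambient) metrics. -/
def RestrictedHA {X Y : Type*} [MetricSpace X] [MetricSpace Y] (ε : ℝ)
    (A : Set X) (B : Set Y) (f : X → Y) : Prop :=
  Set.MapsTo f A B ∧ (∀ b ∈ B, ∃ a ∈ A, dist (f a) b ≤ ε) ∧
    ∀ a₁ ∈ A, ∀ a₂ ∈ A, |dist (f a₁) (f a₂) - dist a₁ a₂| ≤ ε

/-- An `ε`-Hausdorff approximation from `A ⊆ X` to `B ⊆ Y` with respect to the intrinsic
(induced length) metrics of `A` and `B`. -/
def IntrinsicHA {X Y : Type*} [MetricSpace X] [MetricSpace Y] (ε : ℝ)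
    (A : Set X) (B : Set Y) (f : X → Y) : Prop :=
  Set.MapsTo f A B ∧ (∀ b ∈ B, ∃ a ∈ A, intrinsicEDist B (f a) b ≤ ENNReal.ofReal ε) ∧
    ∀ a₁ ∈ A, ∀ a₂ ∈ A,
      intrinsicEDist A a₁ a₂ ≤ intrinsicEDist B (f a₁) (f a₂) + ENNReal.ofReal ε ∧
      intrinsicEDist B (f a₁) (f a₂) ≤ intrinsicEDist A a₁ a₂ + ENNReal.ofReal ε

/-- A bundled pointed metric space. -/
structure PointedMetricSpace where
  carrier : Type
  inst : MetricSpace carrier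
  pt : carrier

attribute [instance] PointedMetricSpace.inst

/-- Pointed Gromov-Hausdorff convergence: for every radius `R` and every `ε > 0`,
eventually there are pointed `ε`-Hausdorff approximations between the closed `R`-balls
around the basepoints, with respect to the restricted metrics. -/
def ConvergesPGH (X : ℕ → PointedMetricSpace) (Y : PointedMetricSpace) : Prop :=
  ∀ R > 0, ∀ ε > 0, ∃ N : ℕ, ∀ i ≥ N, ∃ f : (X i).carrier → Y.carrier,
    f (X i).pt = Y.pt ∧
    RestrictedHA ε (Metric.closedBall (X i).pt R) (Metric.closedBall Y.pt R) f

section AuxiliaryLemmas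

open scoped ENNReal NNReal

variable {X : Type*} [PseudoMetricSpace X]

lemma pathLength_refl (x : X) : pathLength (Path.refl x) = 0 := by
  apply eVariationOn.constant_on
  intro u hu v hv
  simp only [image_univ, mem_range] at hu hv
  obtain ⟨s, rfl⟩ := hu; obtain ⟨t, rfl⟩ := hv
  rfl

lemma edist_le_pathLength {x y : X} (γ : Path x y) : edist x y ≤ pathLength γ := by
  have h := eVariationOn.edist_le (fun t => γ t) (mem_univ (0 : unitInterval)) (mem_univ 1)
  simpa [pathLength] using h

lemma edist_add_edist_le_pathLength {x y : X} (γ : Path x y) (t : unitInterval) :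
    edist x (γ t) + edist (γ t) y ≤ pathLength γ := by
  set u : ℕ → unitInterval := fun i => if i = 0 then 0 else if i = 1 then t else 1 with hu
  have hmono : Monotone u := by
    apply monotone_nat_of_le_succ
    intro n
    match n with
    | 0 => simpa [hu] using unitInterval.nonneg'
    | 1 => simpa [hu] using unitInterval.le_one'
    | (n+2) => simp [hu]
  have h := eVariationOn.sum_le (f := fun t => γ t) (n := 2) hmono (fun i => mem_univ _)
  simp [Finset.sum_range_succ, hu] at h
  simpa [pathLength, edist_comm] using h

lemma intrinsicEDist_le_pathLength {A : Set X} {x y : X} (γ : Path x y)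
    (h : Set.range (fun t => γ t) ⊆ A) : intrinsicEDist A x y ≤ pathLength γ :=
  iInf₂_le γ h

lemma edist_le_intrinsicEDist {A : Set X} (x y : X) : edist x y ≤ intrinsicEDist A x y :=
  le_iInf₂ fun γ _ => edist_le_pathLength γ

lemma intrinsicEDist_self (A : Set X) {x : X} (hx : x ∈ A) : intrinsicEDist A x x = 0 := by
  refine le_antisymm ?_ zero_le
  have h := intrinsicEDist_le_pathLength (A := A) (Path.refl x) ?_
  · simpa [pathLength_refl] using h
  · intro z hz
    simp only [mem_range] at hz
    obtain ⟨s, rfl⟩ := hz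
    exact hx

lemma pathLength_trans_le {x y z : X} (γ₁ : Path x y) (γ₂ : Path y z) :
    pathLength (γ₁.trans γ₂) ≤ pathLength γ₁ + pathLength γ₂ := by
  have h2 : (1:ℝ)/2 ∈ unitInterval := by norm_num
  set m : unitInterval := ⟨1/2, h2⟩ with hm
  have hsplit : (univ : Set unitInterval) = Iic m ∪ Ici m := by
    ext t; simp [le_total t m]
  have hgreat : IsGreatest (Iic m) m := ⟨mem_Iic.2 le_rfl, fun u hu => hu⟩
  have hleast : IsLeast (Ici m) m := ⟨mem_Ici.2 le_rfl, fun u hu => hu⟩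
  have hU := eVariationOn.union (fun t => (γ₁.trans γ₂) t) hgreat hleast
  rw [pathLength, hsplit, hU]
  gcongr
  · have hEq : EqOn (fun t : unitInterval => (γ₁.trans γ₂) t)
        ((fun t : unitInterval => γ₁ t) ∘ (fun t : unitInterval =>
          Set.projIcc (0:ℝ) 1 zero_le_one (2 * (t:ℝ)))) (Iic m) := by
      intro t ht
      have ht' : (t:ℝ) ≤ 1/2 := ht
      simp only [Function.comp_apply, Path.trans_apply, dif_pos ht']
      exact congrArg γ₁ (Set.projIcc_of_mem zero_le_one ⟨by linarith [t.2.1], by linarith⟩).symm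
    rw [eVariationOn.eq_of_eqOn hEq]
    apply eVariationOn.comp_le_of_monotoneOn
    · intro u _ v _ huv
      exact Set.monotone_projIcc _ (by exact_mod_cast by linarith [Subtype.coe_le_coe.2 huv] : (2*(u:ℝ)) ≤ 2*(v:ℝ))
    · exact fun u _ => mem_univ _
  · have hEq : EqOn (fun t : unitInterval => (γ₁.trans γ₂) t)
        ((fun t : unitInterval => γ₂ t) ∘ (fun t : unitInterval =>
          Set.projIcc (0:ℝ) 1 zero_le_one (2 * (t:ℝ) - 1))) (Ici m) := by
      intro t ht
      have ht' : (1:ℝ)/2 ≤ (t:ℝ) := ht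
      simp only [Function.comp_apply, Path.trans_apply]
      split_ifs with h
      · have hteq : (t:ℝ) = 1/2 := le_antisymm h ht'
        have e1 : γ₁ ⟨2*(t:ℝ), by constructor <;> linarith⟩ = y := by
          have h1 : (⟨2*(t:ℝ), by constructor <;> linarith⟩ : unitInterval) = 1 :=
            Subtype.ext (by simp only []; rw [hteq]; norm_num)
          rw [h1]; exact γ₁.target
        have e2 : γ₂ (Set.projIcc (0:ℝ) 1 zero_le_one (2 * (t:ℝ) - 1)) = y := by
          have h0 : (2*(t:ℝ) - 1) = 0 := by rw [hteq]; ring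
          rw [h0, Set.projIcc_left]
          exact γ₂.source
        rw [e2]; exact e1
      · exact congrArg γ₂ (Set.projIcc_of_mem zero_le_one ⟨by linarith, by linarith [t.2.2]⟩).symm
    rw [eVariationOn.eq_of_eqOn hEq]
    apply eVariationOn.comp_le_of_monotoneOn
    · intro u _ v _ huv
      exact Set.monotone_projIcc _ (by exact_mod_cast by linarith [Subtype.coe_le_coe.2 huv] : (2*(u:ℝ)-1) ≤ 2*(v:ℝ)-1)
    · exact fun u _ => mem_univ _

lemma exists_path_of_lt {A : Set X} {x y : X} {c : ℝ≥0∞} (h : intrinsicEDist A x y < c) :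
    ∃ γ : Path x y, Set.range (fun t => γ t) ⊆ A ∧ pathLength γ < c := by
  rw [intrinsicEDist] at h
  obtain ⟨γ, hγ⟩ := iInf_lt_iff.1 h
  by_cases hr : Set.range (fun t => γ t) ⊆ A
  · rw [iInf_pos hr] at hγ; exact ⟨γ, hr, hγ⟩
  · rw [iInf_neg hr] at hγ; exact absurd hγ (by simp)

lemma intrinsicEDist_triangle (A : Set X) (x y z : X) :
    intrinsicEDist A x z ≤ intrinsicEDist A x y + intrinsicEDist A y z := by
  by_cases h1 : intrinsicEDist A x y = ⊤
  · simp [h1]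
  by_cases h2 : intrinsicEDist A y z = ⊤
  · simp [h2]
  refine ENNReal.le_of_forall_pos_le_add fun η hη hfin => ?_
  have hhalf : (0:ℝ≥0∞) < (η:ℝ≥0∞)/2 := by
    simp [ENNReal.div_pos_iff, hη.ne']
  obtain ⟨γ₁, hr1, hl1⟩ := exists_path_of_lt
    (ENNReal.lt_add_right h1 hhalf.ne' : intrinsicEDist A x y < intrinsicEDist A x y + η/2)
  obtain ⟨γ₂, hr2, hl2⟩ := exists_path_of_lt
    (ENNReal.lt_add_right h2 hhalf.ne' : intrinsicEDist A y z < intrinsicEDist A y z + η/2)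
  have hrange : Set.range (fun t => (γ₁.trans γ₂) t) ⊆ A := by
    have hR := Path.trans_range γ₁ γ₂
    intro w hw
    rw [show (fun t => (γ₁.trans γ₂) t) = ((γ₁.trans γ₂ : _ → X)) from rfl, hR] at hw
    rcases hw with h | h
    · exact hr1 h
    · exact hr2 h
  calc intrinsicEDist A x z ≤ pathLength (γ₁.trans γ₂) := intrinsicEDist_le_pathLength _ hrange
    _ ≤ pathLength γ₁ + pathLength γ₂ := pathLength_trans_le _ _
    _ ≤ (intrinsicEDist A x y + η/2) + (intrinsicEDist A y z + η/2) := add_le_add hl1.le hl2.le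
    _ = intrinsicEDist A x y + intrinsicEDist A y z + η := by
        rw [add_add_add_comm, ENNReal.add_halves]

lemma intrinsicEDist_chain (A : Set X) (g : ℕ → X) :
    ∀ n : ℕ, 1 ≤ n →
      intrinsicEDist A (g 0) (g n) ≤ ∑ i ∈ Finset.range n, intrinsicEDist A (g i) (g (i+1)) := by
  intro n
  induction n with
  | zero => intro h; exact absurd h (by norm_num)
  | succ n ih =>
    intro _
    rcases Nat.eq_zero_or_pos n with rfl | hn
    · simp
    · calc intrinsicEDist A (g 0) (g (n+1))
          ≤ intrinsicEDist A (g 0) (g n) + intrinsicEDist A (g n) (g (n+1)) :=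
            intrinsicEDist_triangle A _ _ _
        _ ≤ _ := by
            rw [Finset.sum_range_succ]
            exact add_le_add_left (ih hn) _

lemma exists_near_path (hX : IsLengthSpace X) (u v : X) {θ : ℝ} (hθ : 0 < θ) :
    ∃ σ : Path u v, pathLength σ ≤ ENNReal.ofReal (dist u v + θ) ∧
      ∀ t, dist u (σ t) + dist (σ t) v ≤ dist u v + θ := by
  have hlt : intrinsicEDist univ u v < edist u v + ENNReal.ofReal θ := by
    rw [← hX u v]; exact ENNReal.lt_add_right (edist_ne_top u v) (by simp [hθ])
  obtain ⟨σ, -, hσ⟩ := exists_path_of_lt hlt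
  have hlen : pathLength σ ≤ ENNReal.ofReal (dist u v + θ) := by
    rw [ENNReal.ofReal_add dist_nonneg hθ.le, ← edist_dist]; exact hσ.le
  refine ⟨σ, hlen, fun t => ?_⟩
  have h2 := (edist_add_edist_le_pathLength σ t).trans hlen
  rw [edist_dist, edist_dist, ← ENNReal.ofReal_add dist_nonneg dist_nonneg] at h2
  exact (ENNReal.ofReal_le_ofReal_iff (by positivity)).1 h2

lemma intrinsic_le_of_near (hX : IsLengthSpace X) (B : Set X) (u v : X) {θ : ℝ} (hθ : 0 < θ)
    (hball : ∀ z, dist u z + dist z v ≤ dist u v + θ → z ∈ B) :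
    intrinsicEDist B u v ≤ ENNReal.ofReal (dist u v + θ) := by
  obtain ⟨σ, hlen, hpt⟩ := exists_near_path hX u v hθ
  refine (intrinsicEDist_le_pathLength σ ?_).trans hlen
  rintro z ⟨t, rfl⟩
  exact hball _ (hpt t)

lemma exists_partition {a b : X} (γ : Path a b) {δ : ℝ} (hδ : 0 < δ)
    (hfin : pathLength γ ≠ ⊤) :
    ∃ (N : ℕ) (S : ℕ → unitInterval), 1 ≤ N ∧ Monotone S ∧ S 0 = 0 ∧ S N = 1 ∧
      (∀ i, dist (γ (S i)) (γ (S (i+1))) ≤ δ) ∧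
      ENNReal.ofReal (((N:ℝ) - 1) * δ) ≤ pathLength γ := by
  classical
  set g : ℝ → X := (γ.extend : ℝ → X) with hg
  have hgc : Continuous g := γ.continuous_extend
  set E : ℝ → Set ℝ := fun s => {t | t ∈ Icc s 1 ∧ δ ≤ dist (g s) (g t)} ∪ {1} with hE
  have h1mem : ∀ s, (1:ℝ) ∈ E s := fun s => Or.inr rfl
  have hne : ∀ s, (E s).Nonempty := fun s => ⟨1, h1mem s⟩
  have hbdd : ∀ s, BddBelow (E s) := by
    intro s
    refine ⟨min s 1, ?_⟩
    rintro t (⟨⟨h1, h2⟩, -⟩ | rfl)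
    · exact le_trans (min_le_left _ _) h1
    · exact min_le_right _ _
  have hclosed : ∀ s, IsClosed (E s) := by
    intro s
    apply IsClosed.union
    · have : {t | t ∈ Icc s 1 ∧ δ ≤ dist (g s) (g t)}
          = Icc s 1 ∩ {t | δ ≤ dist (g s) (g t)} := rfl
      rw [this]
      exact isClosed_Icc.inter (isClosed_le continuous_const (continuous_const.dist hgc))
    · exact isClosed_singleton
  set F : ℝ → ℝ := fun s => sInf (E s) with hF
  have hFub : ∀ s ∈ Icc (0:ℝ) 1, s ≤ F s := by
    intro s hs
    apply le_csInf (hne s)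
    rintro t (⟨⟨h1, -⟩, -⟩ | rfl)
    · exact h1
    · exact hs.2
  have hFle1 : ∀ s, F s ≤ 1 := fun s => csInf_le (hbdd s) (h1mem s)
  have hFmem : ∀ s, F s ∈ E s := fun s => (hclosed s).csInf_mem (hne s) (hbdd s)
  have hFdist : ∀ s ∈ Icc (0:ℝ) 1, dist (g s) (g (F s)) ≤ δ := by
    intro s hs
    rcases eq_or_lt_of_le (hFub s hs) with heq | hlt
    · rw [← heq]; simpa using hδ.le
    · have hsub : Ico s (F s) ⊆ {t | dist (g s) (g t) ≤ δ} := by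
        intro t ht
        have htne : t ∉ E s := notMem_of_lt_csInf ht.2 (hbdd s)
        have ht1 : t ≤ 1 := le_trans ht.2.le (hFle1 s)
        by_contra hcon
        simp only [mem_setOf_eq, not_le] at hcon
        exact htne (Or.inl ⟨⟨ht.1, ht1⟩, hcon.le⟩)
      have hcl : IsClosed {t | dist (g s) (g t) ≤ δ} :=
        isClosed_le (continuous_const.dist hgc) continuous_const
      have : closure (Ico s (F s)) ⊆ {t | dist (g s) (g t) ≤ δ} :=
        hcl.closure_subset_iff.2 hsub
      rw [closure_Ico hlt.ne] at this
      exact this (right_mem_Icc.2 hlt.le)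
  have hFge : ∀ s, F s < 1 → δ ≤ dist (g s) (g (F s)) := by
    intro s hlt
    rcases hFmem s with ⟨-, h⟩ | h
    · exact h
    · exact absurd h hlt.ne
  set S' : ℕ → ℝ := fun n => F^[n] 0 with hS'
  have hS'succ : ∀ n, S' (n+1) = F (S' n) := by
    intro n; simp [hS', Function.iterate_succ_apply']
  have hS'mem : ∀ n, S' n ∈ Icc (0:ℝ) 1 := by
    intro n
    induction n with
    | zero => simp [hS']
    | succ n ih =>
      rw [hS'succ n]
      exact ⟨le_trans ih.1 (hFub _ ih), hFle1 _⟩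
  have hS'mono : Monotone S' := by
    apply monotone_nat_of_le_succ
    intro n
    rw [hS'succ n]
    exact hFub _ (hS'mem n)
  set S : ℕ → unitInterval := fun n => ⟨S' n, hS'mem n⟩ with hSdef
  have hγS : ∀ n, γ (S n) = g (S' n) := fun n => (γ.extend_apply (hS'mem n)).symm
  have hSmono : Monotone S := fun m n h => Subtype.mk_le_mk.2 (hS'mono h)
  have hsegdist : ∀ i, dist (γ (S i)) (γ (S (i+1))) ≤ δ := by
    intro i
    rw [hγS, hγS, hS'succ]
    exact hFdist _ (hS'mem i)
  have hsum : ∀ k : ℕ, ∑ i ∈ Finset.range k, edist (γ (S (i+1))) (γ (S i)) ≤ pathLength γ :=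
    fun k => eVariationOn.sum_le (f := fun t => γ t) (n := k) hSmono (fun i => mem_univ _)
  have hcount : ∀ k : ℕ, S' k < 1 → ENNReal.ofReal ((k:ℝ) * δ) ≤ pathLength γ := by
    intro k hk
    have hlow : ∀ i ∈ Finset.range k, ENNReal.ofReal δ ≤ edist (γ (S (i+1))) (γ (S i)) := by
      intro i hi
      rw [Finset.mem_range] at hi
      have hlt1 : S' (i+1) < 1 := lt_of_le_of_lt (hS'mono (Nat.succ_le_of_lt hi)) hk
      have hge := hFge (S' i) (by rw [← hS'succ]; exact hlt1)
      rw [edist_dist, dist_comm]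
      apply ENNReal.ofReal_le_ofReal
      rw [hγS, hγS, hS'succ]
      exact hge
    calc ENNReal.ofReal ((k:ℝ) * δ)
        = (Finset.range k).card • ENNReal.ofReal δ := by
          rw [Finset.card_range, nsmul_eq_mul, ← ENNReal.ofReal_natCast k,
            ← ENNReal.ofReal_mul (Nat.cast_nonneg k)]
      _ ≤ ∑ i ∈ Finset.range k, edist (γ (S (i+1))) (γ (S i)) :=
          Finset.card_nsmul_le_sum _ _ _ hlow
      _ ≤ pathLength γ := hsum k
  have hexists : ∃ n, S' n = 1 := by
    set k₀ : ℕ := ⌈(pathLength γ).toReal / δ⌉₊ + 1 with hk₀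
    refine ⟨k₀, ?_⟩
    by_contra hcon
    have hlt : S' k₀ < 1 := lt_of_le_of_ne (hS'mem k₀).2 hcon
    have h1 := hcount k₀ hlt
    rw [← ENNReal.ofReal_toReal hfin, ENNReal.ofReal_le_ofReal_iff ENNReal.toReal_nonneg] at h1
    have h2 : (k₀:ℝ) ≤ (pathLength γ).toReal / δ := (le_div_iff₀ hδ).2 h1
    have h3 : ((⌈(pathLength γ).toReal / δ⌉₊ : ℝ) + 1) ≤ (pathLength γ).toReal / δ := by
      rw [hk₀] at h2; push_cast at h2; linarith
    have h4 : (pathLength γ).toReal / δ ≤ ⌈(pathLength γ).toReal / δ⌉₊ := Nat.le_ceil _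
    linarith
  set N : ℕ := Nat.find hexists with hN
  have hSN : S' N = 1 := Nat.find_spec hexists
  have hN1 : 1 ≤ N := by
    rcases Nat.eq_zero_or_pos N with h0 | h
    · exfalso
      have : S' 0 = 1 := by rw [← h0]; exact hSN
      simp [hS'] at this
    · exact h
  refine ⟨N, S, hN1, hSmono, ?_, ?_, hsegdist, ?_⟩
  · apply Subtype.ext; simp [hSdef, hS']
  · apply Subtype.ext; simpa [hSdef] using hSN
  · have hprev : S' (N - 1) < 1 := by
      apply lt_of_le_of_ne (hS'mem _).2
      exact Nat.find_min hexists (by omega)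
    have hc := hcount (N-1) hprev
    have hcast : ((N - 1 : ℕ) : ℝ) = (N:ℝ) - 1 := by
      rw [Nat.cast_sub hN1]; norm_num
    rwa [hcast] at hc

end AuxiliaryLemmas
set_option maxHeartbeats 1000000 in
/-- If `f : B(y,3R) → B(p',3R)` is a pointed `ε`-Hausdorff
approximation with respect to restricted metrics between balls in complete locally
compact length spaces, and `δ = √ε`, then for all `a, b ∈ B(y,R)` the intrinsic distance
in `B(p', R+ε+δ)` between `f(a)` and `f(b)` is at most the intrinsic distance in
`B(y,R)` between `a` and `b` plus `(2R+1)δ + ε`. -/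
theorem almost_distance_nonincreasing_on_intrinsic_balls
    {Y M : Type*} [MetricSpace Y] [MetricSpace M]
    (hY : IsLengthSpace Y) (hM : IsLengthSpace M)
    [ProperSpace Y] [ProperSpace M] [CompleteSpace Y] [CompleteSpace M]
    (y : Y) (p' : M) (R ε : ℝ) (hR : 0 < R) (hε : 0 < ε)
    (f : Y → M) (hfp : f y = p')
    (hf : RestrictedHA ε (Metric.closedBall y (3 * R)) (Metric.closedBall p' (3 * R)) f)
    (δ : ℝ) (hδ : δ = Real.sqrt ε) :
    ∀ a ∈ Metric.closedBall y R, ∀ b ∈ Metric.closedBall y R,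
      intrinsicEDist (Metric.closedBall p' (R + ε + δ)) (f a) (f b) ≤
        intrinsicEDist (Metric.closedBall y R) a b +
          ENNReal.ofReal ((2 * R + 1) * δ + ε) := by
  intro a ha b hb
  have hδpos : 0 < δ := hδ ▸ Real.sqrt_pos.2 hε
  have hδsq : δ * δ = ε := by rw [hδ]; exact Real.mul_self_sqrt hε.le
  have hcnonneg : 0 ≤ (2 * R + 1) * δ + ε := by positivity
  have hsub : closedBall y R ⊆ closedBall y (3*R) :=
    closedBall_subset_closedBall (by linarith)
  have hy3 : y ∈ closedBall y (3*R) := mem_closedBall_self (by linarith)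
  have hdist : ∀ x ∈ closedBall y R, dist (f x) p' ≤ R + ε := by
    intro x hx
    have h := hf.2.2 x (hsub hx) y hy3
    rw [hfp] at h
    have h2 := (abs_le.1 h).2
    have hxy : dist x y ≤ R := mem_closedBall.1 hx
    linarith
  have hdist3 : ∀ x ∈ closedBall y R, dist (f x) p' ≤ 3*R := by
    intro x hx
    exact mem_closedBall.1 (hf.1 (hsub hx))
  have hHA : ∀ x₁ ∈ closedBall y R, ∀ x₂ ∈ closedBall y R,
      dist (f x₁) (f x₂) ≤ dist x₁ x₂ + ε := by
    intro x₁ h₁ x₂ h₂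
    linarith [(abs_le.1 (hf.2.2 x₁ (hsub h₁) x₂ (hsub h₂))).2]
  set B := closedBall p' (R + ε + δ) with hB
  set L := intrinsicEDist (closedBall y R) a b with hL
  by_cases hLtop : L = ⊤
  · rw [hLtop, top_add]; exact le_top
  by_cases hab : a = b
  · subst hab
    have hfa : f a ∈ B := by
      rw [hB, mem_closedBall]
      have := hdist a ha
      linarith
    rw [intrinsicEDist_self B hfa]
    exact zero_le
  set Lr := L.toReal with hLr
  have hLofReal : L = ENNReal.ofReal Lr := (ENNReal.ofReal_toReal hLtop).symm
  have hLrnonneg : 0 ≤ Lr := ENNReal.toReal_nonneg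
  have hdab : 0 < dist a b := dist_pos.2 hab
  have hdabLr : dist a b ≤ Lr := by
    have h1 : edist a b ≤ L := edist_le_intrinsicEDist a b
    rw [edist_dist, hLofReal, ENNReal.ofReal_le_ofReal_iff hLrnonneg] at h1
    exact h1
  -- the chain construction
  have CHAIN : ∀ C : ℝ, (∀ x ∈ closedBall y R, dist (f x) p' ≤ C) →
      C + (δ + ε)/2 < R + ε + δ → Lr ≤ 2*R →
      intrinsicEDist B (f a) (f b) ≤ L + ENNReal.ofReal ((2*R+1)*δ + ε) := by
    intro C hC hslack hLr2R
    set θ₀ : ℝ := δ / (2*(1+δ)) with hθ₀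
    have hθ₀pos : 0 < θ₀ := by positivity
    have hθ₀eq : θ₀ * (2*(1+δ)) = δ := by
      rw [hθ₀]; field_simp
    have hlt : L < L + ENNReal.ofReal θ₀ :=
      ENNReal.lt_add_right hLtop (ENNReal.ofReal_pos.2 hθ₀pos).ne'
    rw [hL] at hlt
    obtain ⟨γ, hrange, hlen⟩ := exists_path_of_lt hlt
    rw [← hL] at hlen
    have hγfin : pathLength γ ≠ ⊤ := ne_top_of_lt hlen
    obtain ⟨N, S, hN1, hSmono, hS0, hSN, hseg, hNcount⟩ := exists_partition γ hδpos hγfin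
    set x : ℕ → Y := fun i => γ (S i) with hx
    have hxmem : ∀ i, x i ∈ closedBall y R := fun i => hrange ⟨S i, rfl⟩
    have hx0 : x 0 = a := by rw [hx]; simp only [hS0]; exact γ.source
    have hxN : x N = b := by rw [hx]; simp only [hSN]; exact γ.target
    have hNpos : (0:ℝ) < N := by exact_mod_cast hN1
    set sl : ℝ := R + ε + δ - C - (δ + ε)/2 with hsl
    have hslpos : 0 < sl := by rw [hsl]; linarith
    set θ' : ℝ := min sl (δ / (2*N)) with hθ'
    have hθ'pos : 0 < θ' := lt_min hslpos (by positivity)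
    have hθ'sl : θ' ≤ sl := min_le_left _ _
    have hNθ' : (N:ℝ) * θ' ≤ δ/2 := by
      have h1 : θ' ≤ δ / (2*N) := min_le_right _ _
      have h2 : (N:ℝ) * θ' ≤ (N:ℝ) * (δ / (2*N)) := by
        apply mul_le_mul_of_nonneg_left h1 (by positivity)
      rw [mul_div_assoc'] at h2
      calc (N:ℝ) * θ' ≤ (N:ℝ) * δ / (2*N) := h2
        _ = δ/2 := by field_simp
    -- each segment
    have hsegM : ∀ i, intrinsicEDist B (f (x i)) (f (x (i+1))) ≤
        ENNReal.ofReal (dist (x (i+1)) (x i) + (ε + θ')) := by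
      intro i
      have hdxx : dist (x i) (x (i+1)) ≤ δ := hseg i
      have hdff : dist (f (x i)) (f (x (i+1))) ≤ δ + ε :=
        le_trans (hHA (x i) (hxmem i) (x (i+1)) (hxmem (i+1))) (by linarith)
      have step : intrinsicEDist B (f (x i)) (f (x (i+1))) ≤
          ENNReal.ofReal (dist (f (x i)) (f (x (i+1))) + θ') := by
        apply intrinsic_le_of_near hM B _ _ hθ'pos
        intro z hz
        rw [hB, mem_closedBall]
        have hCi := hC (x i) (hxmem i)
        have hCi1 := hC (x (i+1)) (hxmem (i+1))
        rcases le_or_gt (dist (f (x i)) z) ((δ + ε + θ')/2) with hle | hgt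
        · calc dist z p' ≤ dist z (f (x i)) + dist (f (x i)) p' := dist_triangle _ _ _
            _ ≤ (δ+ε+θ')/2 + C := by rw [dist_comm]; linarith
            _ ≤ R + ε + δ := by rw [hsl] at hθ'sl; linarith
        · have h2 : dist z (f (x (i+1))) ≤ (δ+ε+θ')/2 := by linarith
          calc dist z p' ≤ dist z (f (x (i+1))) + dist (f (x (i+1))) p' := dist_triangle _ _ _
            _ ≤ (δ+ε+θ')/2 + C := by linarith
            _ ≤ R + ε + δ := by rw [hsl] at hθ'sl; linarith
      refine step.trans (ENNReal.ofReal_le_ofReal ?_)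
      have := hHA (x i) (hxmem i) (x (i+1)) (hxmem (i+1))
      rw [dist_comm (x (i+1)) (x i)]
      linarith
    -- chain together
    have hchain := intrinsicEDist_chain B (fun i => f (x i)) N hN1
    rw [hx0, hxN] at hchain
    have hsum2 : ∑ i ∈ Finset.range N, edist (x (i+1)) (x i) ≤ pathLength γ :=
      eVariationOn.sum_le (f := fun t => γ t) (n := N) hSmono (fun i => mem_univ _)
    have hNδ : ((N:ℝ) - 1) * δ ≤ Lr + θ₀ := by
      have h1 : ENNReal.ofReal (((N:ℝ) - 1) * δ) ≤ ENNReal.ofReal (Lr + θ₀) := by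
        refine hNcount.trans ?_
        refine hlen.le.trans ?_
        rw [hLofReal, ← ENNReal.ofReal_add hLrnonneg hθ₀pos.le]
      exact (ENNReal.ofReal_le_ofReal_iff (by positivity)).1 h1
    calc intrinsicEDist B (f a) (f b)
        ≤ ∑ i ∈ Finset.range N, intrinsicEDist B (f (x i)) (f (x (i+1))) := hchain
      _ ≤ ∑ i ∈ Finset.range N, (edist (x (i+1)) (x i) + ENNReal.ofReal (ε + θ')) := by
          apply Finset.sum_le_sum
          intro i _
          refine (hsegM i).trans ?_
          rw [edist_dist, ← ENNReal.ofReal_add dist_nonneg (by positivity)]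
      _ = (∑ i ∈ Finset.range N, edist (x (i+1)) (x i)) + N * ENNReal.ofReal (ε + θ') := by
          rw [Finset.sum_add_distrib, Finset.sum_const, Finset.card_range, nsmul_eq_mul]
      _ ≤ (L + ENNReal.ofReal θ₀) + ENNReal.ofReal ((N:ℝ) * (ε + θ')) := by
          apply add_le_add (hsum2.trans hlen.le)
          rw [ENNReal.ofReal_mul (Nat.cast_nonneg N), ENNReal.ofReal_natCast]
      _ = L + ENNReal.ofReal (θ₀ + (N:ℝ) * (ε + θ')) := by
          rw [add_assoc, ← ENNReal.ofReal_add hθ₀pos.le (by positivity)]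
      _ ≤ L + ENNReal.ofReal ((2*R+1)*δ + ε) := by
          apply add_le_add_right
          apply ENNReal.ofReal_le_ofReal
          have hNε : (N:ℝ) * ε ≤ (Lr + θ₀) * δ + ε := by
            have h1 : (((N:ℝ) - 1) * δ) * δ ≤ (Lr + θ₀) * δ :=
              mul_le_mul_of_nonneg_right hNδ hδpos.le
            nlinarith [h1, hδsq]
          have hLrδ : Lr * δ ≤ 2*R*δ := mul_le_mul_of_nonneg_right hLr2R hδpos.le
          nlinarith [hNε, hNθ', hLrδ, hθ₀eq]
  -- the "via basepoint" route
  have VIA : ∀ θ : ℝ, 0 < θ → dist (f a) p' + θ ≤ R+ε+δ → dist (f b) p' + θ ≤ R+ε+δ →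
      intrinsicEDist B (f a) (f b) ≤
        ENNReal.ofReal (dist (f a) p' + dist (f b) p' + 2*θ) := by
    intro θ hθ h1 h2
    have t1 : intrinsicEDist B (f a) p' ≤ ENNReal.ofReal (dist (f a) p' + θ) := by
      apply intrinsic_le_of_near hM B _ _ hθ
      intro z hz
      rw [hB, mem_closedBall]
      have h3 : 0 ≤ dist (f a) z := dist_nonneg
      linarith
    have t2 : intrinsicEDist B p' (f b) ≤ ENNReal.ofReal (dist p' (f b) + θ) := by
      apply intrinsic_le_of_near hM B _ _ hθ
      intro z hz
      rw [hB, mem_closedBall]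
      have h3 : 0 ≤ dist z (f b) := dist_nonneg
      have h4 : dist p' z ≤ dist p' (f b) + θ := by linarith
      rw [dist_comm p' (f b)] at h4
      rw [dist_comm]
      linarith
    calc intrinsicEDist B (f a) (f b)
        ≤ intrinsicEDist B (f a) p' + intrinsicEDist B p' (f b) :=
          intrinsicEDist_triangle B _ _ _
      _ ≤ ENNReal.ofReal (dist (f a) p' + θ) + ENNReal.ofReal (dist p' (f b) + θ) :=
          add_le_add t1 t2
      _ = ENNReal.ofReal (dist (f a) p' + dist (f b) p' + 2*θ) := by
          rw [← ENNReal.ofReal_add (by positivity) (by positivity), dist_comm p' (f b)]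
          ring_nf
  have hVIAfinal : ∀ d : ℝ, 0 ≤ d →
      ENNReal.ofReal d ≤ L →
      ∀ θ : ℝ, dist (f a) p' + dist (f b) p' + 2*θ ≤ d + (2*R+1)*δ + ε →
      ENNReal.ofReal (dist (f a) p' + dist (f b) p' + 2*θ) ≤
        L + ENNReal.ofReal ((2*R+1)*δ + ε) := by
    intro d hd hdL θ hineq
    calc ENNReal.ofReal (dist (f a) p' + dist (f b) p' + 2*θ)
        ≤ ENNReal.ofReal (d + ((2*R+1)*δ + ε)) := by
          apply ENNReal.ofReal_le_ofReal; linarith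
      _ = ENNReal.ofReal d + ENNReal.ofReal ((2*R+1)*δ + ε) :=
          ENNReal.ofReal_add hd hcnonneg
      _ ≤ L + ENNReal.ofReal ((2*R+1)*δ + ε) := add_le_add_left hdL _
  have hfa1 : dist (f a) p' ≤ R + ε := hdist a ha
  have hfb1 : dist (f b) p' ≤ R + ε := hdist b hb
  have hfa3 : dist (f a) p' ≤ 3*R := hdist3 a ha
  have hfb3 : dist (f b) p' ≤ 3*R := hdist3 b hb
  rcases le_or_gt Lr (2*R) with hLr2R | hLr2R
  · rcases lt_or_ge ε 1 with hε1 | hε1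
    · -- chain with C = R + ε ; here ε < δ
      have hεδ : ε < δ := by nlinarith [hδsq, hδpos, hε1]
      exact CHAIN (R+ε) hdist (by linarith) hLr2R
    · have hδ1 : 1 ≤ δ := by nlinarith [hδsq, hδpos, hε1]
      rcases le_or_gt δ (2*R) with hδ2R | hδ2R
      · -- via route, lower bound by dist a b
        set θ : ℝ := min (δ/2) (dist a b / 2) with hθdef
        have hθpos : 0 < θ := lt_min (by positivity) (by positivity)
        have hθδ : θ ≤ δ/2 := min_le_left _ _
        have hθd : 2*θ ≤ dist a b := by
          have := min_le_right (δ/2) (dist a b / 2)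
          rw [hθdef]; linarith [this]
        have hkey : 2*R + ε ≤ (2*R+1)*δ := by
          nlinarith [mul_nonneg (by linarith : (0:ℝ) ≤ δ - 1) (by linarith : (0:ℝ) ≤ 2*R - δ), hδsq]
        refine (VIA θ hθpos (by linarith) (by linarith)).trans ?_
        apply hVIAfinal (dist a b) dist_nonneg
        · rw [← edist_dist]; exact edist_le_intrinsicEDist a b
        · linarith
      · -- chain with C = 3R : need 3R + (δ+ε)/2 < R+ε+δ, i.e. 4R < ε + δ
        have h4R : 4*R < ε + δ := by nlinarith [hδsq, hδ1, hδ2R]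
        exact CHAIN (3*R) hdist3 (by linarith) hLr2R
  · -- Lr > 2R
    set θ : ℝ := min (δ/2) ((Lr - 2*R) / 2) with hθdef
    have hθpos : 0 < θ := lt_min (by positivity) (by linarith)
    have hθδ : θ ≤ δ/2 := min_le_left _ _
    have hθL : 2*θ ≤ Lr - 2*R := by
      have := min_le_right (δ/2) ((Lr - 2*R)/2)
      rw [hθdef]; linarith [this]
    have hLrL : ENNReal.ofReal Lr ≤ L := le_of_eq hLofReal.symm
    rcases le_or_gt δ (2*R+1) with hδsm | hδbig
    · refine (VIA θ hθpos (by linarith) (by linarith)).trans ?_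
      apply hVIAfinal Lr hLrnonneg hLrL
      have hεbd : ε ≤ (2*R+1)*δ := by
        have h := mul_le_mul_of_nonneg_right hδsm hδpos.le
        linarith [hδsq]
      linarith
    · have hprod : (2*R+1)*(2*R+1) < (2*R+1)*δ :=
        mul_lt_mul_of_pos_left hδbig (by linarith : (0:ℝ) < 2*R+1)
      have hprod2 : (2*R+1)*δ < δ*δ := mul_lt_mul_of_pos_right hδbig hδpos
      have hεbig : (2*R+1)*(2*R+1) < ε := by linarith [hδsq]
      have hε4R : 4*R < ε := by nlinarith [hεbig, sq_nonneg R]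
      refine (VIA θ hθpos (by linarith) (by linarith)).trans ?_
      apply hVIAfinal Lr hLrnonneg hLrL
      have h4Rδ : 4*R ≤ (2*R+1)*δ := by nlinarith [hprod, sq_nonneg R]
      linarith
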